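/- arXiv:1209.5711 — 2 statements merged into one kernel-verified Lean document; each statement's English description precedes it below -/
import Mathlib

section
/- For x ∈ C^3, the following are equivalent: (1) x ∈ E; (2) for every ω ∈ C with |ω| = 1, (x1 + ω·x2, ω·x3) ∈ G2; (3) for every ω ∈ C with |ω| ≤ 1, (x1 + ω·x2, ω·x3) ∈ G2. -/
/-!
Put `a = x₁ - x̄₂ x₃` and `b = x₂ - x̄₁ x₃`, so that `x ∈ E` reads `|a| + |b| + |x₃|² < 1`.
For `s = x₁ + ω x₂` and `p = ω x₃` one has `s - s̄ p = a + ω b + (1 - |ω|²) x̄₂ x₃`.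
On the circle this is `a + ω b`, and choosing `ω` to align `ω b` with `a` shows that the circle
condition forces `x ∈ E`. Inside the disc the extra term is controlled by the estimate
`(1 + |x₃|)(|x₂| - |x₃|) ≤ |b|`, which follows from the two triangle inequalities
`|x₁| ≤ |a| + |x₂||x₃|` and `|x₂| ≤ |b| + |x₁||x₃|` once `x ∈ E`.
-/

open Complex

/-- The tetrablock. -/
def tetrablockE : Set (ℂ × ℂ × ℂ) :=
  {x | ‖x.1 - (starRingEnd ℂ) x.2.1 * x.2.2‖ +
       ‖x.2.1 - (starRingEnd ℂ) x.1 * x.2.2‖ +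
       (‖x.2.2‖) ^ 2 < 1}

/-- The symmetrized bidisc. -/
def symBidisc : Set (ℂ × ℂ) :=
  {p | ‖p.1 - (starRingEnd ℂ) p.1 * p.2‖ + (‖p.2‖) ^ 2 < 1}

open ComplexConjugate

section RealEstimates

variable {A B C X₁ X₂ : ℝ}

lemma one_add_mul_sub_le (hA : 0 ≤ A) (hB : 0 ≤ B) (hC : 0 ≤ C) (hE : A + B + C ^ 2 < 1)
    (h₁ : X₁ ≤ A + X₂ * C) (h₂ : X₂ ≤ B + X₁ * C) :
    (1 + C) * (X₂ - C) ≤ B := by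
  have hC1 : C < 1 := by nlinarith
  have hX₂ : X₂ * (1 - C ^ 2) ≤ B + A * C := by nlinarith
  have hAC : A * C ≤ (1 - B - C ^ 2) * C := mul_le_mul_of_nonneg_right (by linarith) hC
  -- `X₂ (1 - C²) ≤ B (1 - C) + C (1 - C²)`; divide by `1 - C > 0`
  nlinarith

lemma add_mul_add_sq_mul_lt_one {r : ℝ} (hA : 0 ≤ A) (hB : 0 ≤ B) (hC : 0 ≤ C)
    (hr₀ : 0 ≤ r) (hr₁ : r ≤ 1) (hE : A + B + C ^ 2 < 1)
    (h₁ : X₁ ≤ A + X₂ * C) (h₂ : X₂ ≤ B + X₁ * C) :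
    A + r * B + (1 - r ^ 2) * (X₂ * C) + r ^ 2 * C ^ 2 < 1 := by
  have hC1 : C ≤ 1 := by nlinarith
  have hsplit : (1 + r) * C * (X₂ - C) ≤ B := by
    rcases le_total X₂ C with hle | hle
    · nlinarith [mul_nonneg (by linarith : (0 : ℝ) ≤ 1 + r) hC]
    · calc (1 + r) * C * (X₂ - C) ≤ (1 + C) * (X₂ - C) := by
            gcongr
            nlinarith
        _ ≤ B := one_add_mul_sub_le hA hB hC hE h₁ h₂
  have h1r : 0 ≤ 1 - r := by linarith
  -- `1 - LHS = (1 - A - B - C²) + (1 - r) (B - (1 + r) C (X₂ - C))`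
  nlinarith [mul_le_mul_of_nonneg_left hsplit h1r]

end RealEstimates

lemma add_mul_sub_conj_add_mul_mul (x₁ x₂ x₃ ω : ℂ) :
    x₁ + ω * x₂ - conj (x₁ + ω * x₂) * (ω * x₃) =
      x₁ - conj x₂ * x₃ + ω * (x₂ - conj x₁ * x₃) + (1 - (‖ω‖ : ℂ) ^ 2) * (conj x₂ * x₃) := by
  rw [← mul_conj', map_add, map_mul]
  ring

lemma exists_norm_eq_one_norm_add_mul_eq (a b : ℂ) :
    ∃ ω : ℂ, ‖ω‖ = 1 ∧ ‖a + ω * b‖ = ‖a‖ + ‖b‖ := by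
  set e : ℝ → ℂ := fun t ↦ exp (t * I)
  have hrot : e (arg a - arg b) * b = ‖b‖ * e (arg a) := by
    have hexp : e (arg a) = e (arg a - arg b) * e (arg b) := by
      simp only [e, ← exp_add]; push_cast; ring_nf
    linear_combination -e (arg a - arg b) * norm_mul_exp_arg_mul_I b - ‖b‖ * hexp
  have hsum : a + e (arg a - arg b) * b = ((‖a‖ + ‖b‖ : ℝ) : ℂ) * e (arg a) := by
    rw [hrot]; push_cast
    linear_combination -norm_mul_exp_arg_mul_I a
  refine ⟨e (arg a - arg b), norm_exp_ofReal_mul_I _, ?_⟩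
  rw [hsum, norm_mul, norm_exp_ofReal_mul_I, mul_one, norm_real,
    Real.norm_of_nonneg (by positivity)]

variable {x₁ x₂ x₃ : ℂ}

lemma norm_le_norm_sub_conj_mul_add (x₁ x₂ x₃ : ℂ) :
    ‖x₁‖ ≤ ‖x₁ - conj x₂ * x₃‖ + ‖x₂‖ * ‖x₃‖ := by
  simpa [norm_mul] using norm_le_norm_sub_add x₁ (conj x₂ * x₃)

lemma mem_symBidisc_of_mem_tetrablockE (hx : (x₁, x₂, x₃) ∈ tetrablockE) {ω : ℂ}
    (hω : ‖ω‖ ≤ 1) : (x₁ + ω * x₂, ω * x₃) ∈ symBidisc := by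
  set a := x₁ - conj x₂ * x₃
  set b := x₂ - conj x₁ * x₃
  have hω₂ : 0 ≤ 1 - ‖ω‖ ^ 2 := by nlinarith [norm_nonneg ω]
  have hbound : ‖x₁ + ω * x₂ - conj (x₁ + ω * x₂) * (ω * x₃)‖ ≤
      ‖a‖ + ‖ω‖ * ‖b‖ + (1 - ‖ω‖ ^ 2) * (‖x₂‖ * ‖x₃‖) := by
    rw [add_mul_sub_conj_add_mul_mul, ← ofReal_pow, ← ofReal_one, ← ofReal_sub]
    refine (norm_add₃_le ..).trans_eq ?_
    rw [norm_mul, norm_mul, norm_real, Real.norm_of_nonneg hω₂, norm_mul, norm_conj]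
  have hlt := add_mul_add_sq_mul_lt_one (norm_nonneg a) (norm_nonneg b) (norm_nonneg x₃)
    (norm_nonneg ω) hω hx (norm_le_norm_sub_conj_mul_add x₁ x₂ x₃)
    (norm_le_norm_sub_conj_mul_add x₂ x₁ x₃)
  change _ + ‖ω * x₃‖ ^ 2 < 1
  rw [norm_mul, mul_pow]
  linarith

lemma mem_tetrablockE_of_forall_norm_eq_one
    (h : ∀ ω : ℂ, ‖ω‖ = 1 → (x₁ + ω * x₂, ω * x₃) ∈ symBidisc) :
    (x₁, x₂, x₃) ∈ tetrablockE := by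
  obtain ⟨ω, hω, hnorm⟩ := exists_norm_eq_one_norm_add_mul_eq (x₁ - conj x₂ * x₃)
    (x₂ - conj x₁ * x₃)
  have hmem : _ + ‖ω * x₃‖ ^ 2 < 1 := h ω hω
  rw [add_mul_sub_conj_add_mul_mul, hω, norm_mul, hω] at hmem
  change ‖_‖ + ‖_‖ + _ < 1
  simpa [hnorm] using hmem

theorem tetrablock_tfae (x : ℂ × ℂ × ℂ) :
    (x ∈ tetrablockE ↔
      ∀ ω : ℂ, ‖ω‖ = 1 → (x.1 + ω * x.2.1, ω * x.2.2) ∈ symBidisc) ∧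
    (x ∈ tetrablockE ↔
      ∀ ω : ℂ, ‖ω‖ ≤ 1 → (x.1 + ω * x.2.1, ω * x.2.2) ∈ symBidisc) := by
  obtain ⟨x₁, x₂, x₃⟩ := x
  have hdisc : (x₁, x₂, x₃) ∈ tetrablockE → ∀ ω : ℂ, ‖ω‖ ≤ 1 →
      (x₁ + ω * x₂, ω * x₃) ∈ symBidisc :=
    fun hx _ hω ↦ mem_symBidisc_of_mem_tetrablockE hx hω
  exact ⟨⟨fun hx ω hω ↦ hdisc hx ω hω.le, mem_tetrablockE_of_forall_norm_eq_one⟩,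
    ⟨hdisc, fun h ↦ mem_tetrablockE_of_forall_norm_eq_one fun ω hω ↦ h ω hω.le⟩⟩
end

section
/- For any ω with 0 < |ω| ≤ 1 and any (s,p) ∈ G_{2,|ω|}, the point x = ((s - conj(s)p)/(1 - |p|^2), ((conj(s) - s·conj(p))/(1 - |p|^2))·(p/ω), p/ω) lies in the tetrablock E and satisfies (x1 + ω·x2, ω·x3) = (s, p). In particular Φ_ω(E) = G_{2,|ω|}. -/
open Complex

def Drho (ρ : ℝ) : Set (ℂ × ℂ) :=
  {z | ‖z.1‖ < 1 ∧ ‖z.2‖ < 1 ∧ ‖z.1 * z.2‖ < ρ}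

def G2rho (ρ : ℝ) : Set (ℂ × ℂ) :=
  (fun z : ℂ × ℂ => (z.1 + z.2, z.1 * z.2)) '' Drho ρ

/-!
A point `(s, p) = (z₁ + z₂, z₁ z₂)` satisfies
`s - s̄ p = z₁ (1 - |z₂|²) + z₂ (1 - |z₁|²)`, from which one reads off that `(s, p)` lies in
`G_{2,ρ}` exactly when `|s - s̄ p| < 1 - |p|²` and `|p| < ρ`. For `x ∈ E` and `s = x₁ + ω x₂`,
`p = ω x₃` one has `s - s̄ p = (x₁ - x̄₂ x₃) + ω (x₂ - x̄₁ x₃) + (1 - |ω|²) x̄₂ x₃`, and the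
tetrablock inequality bounds the right-hand side by `1 - |p|²`. Conversely the explicit point has
`x₂ = x̄₁ x₃`, for which membership in `E` reduces to `|x₁| < 1`.
-/

open ComplexConjugate

lemma add_sub_conj_add_mul_mul (z w : ℂ) :
    z + w - conj (z + w) * (z * w) =
      z * ((1 - ‖w‖ ^ 2 : ℝ) : ℂ) + w * ((1 - ‖z‖ ^ 2 : ℝ) : ℂ) := by
  rw [map_add]
  push_cast
  linear_combination (-z) * mul_conj' w - w * mul_conj' z

lemma norm_lt_one_of_norm_add_sub_conj_mul_lt {z w : ℂ}
    (h : ‖z + w - conj (z + w) * (z * w)‖ < 1 - ‖z * w‖ ^ 2) : ‖z‖ < 1 := by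
  rw [add_sub_conj_add_mul_mul, norm_mul] at h
  by_contra! hz
  have hzw : ‖z‖ * ‖w‖ < 1 := by
    nlinarith [norm_nonneg (z * ((1 - ‖w‖ ^ 2 : ℝ) : ℂ) + w * ((1 - ‖z‖ ^ 2 : ℝ) : ℂ)),
      mul_nonneg (norm_nonneg z) (norm_nonneg w)]
  have hw : ‖w‖ < 1 := by nlinarith [norm_nonneg w]
  have hlower : ‖z‖ * (1 - ‖w‖ ^ 2) - ‖w‖ * (‖z‖ ^ 2 - 1) ≤
      ‖z * ((1 - ‖w‖ ^ 2 : ℝ) : ℂ) + w * ((1 - ‖z‖ ^ 2 : ℝ) : ℂ)‖ := by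
    refine le_trans (le_of_eq ?_) (norm_sub_le_norm_add _ _)
    rw [norm_mul, norm_mul, norm_real, norm_real, Real.norm_of_nonneg (by nlinarith [norm_nonneg w]),
      Real.norm_of_nonpos (by nlinarith)]
    ring
  -- the two sides differ by `(‖z‖ - 1) (1 - ‖w‖) (1 - ‖z‖ ‖w‖) ≥ 0`
  nlinarith [mul_nonneg (mul_nonneg (sub_nonneg.2 hz) (sub_nonneg.2 hw.le)) (sub_nonneg.2 hzw.le)]

lemma norm_add_sub_conj_mul_lt_iff (z w : ℂ) :
    ‖z + w - conj (z + w) * (z * w)‖ < 1 - ‖z * w‖ ^ 2 ↔ ‖z‖ < 1 ∧ ‖w‖ < 1 := by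
  refine ⟨fun h => ⟨norm_lt_one_of_norm_add_sub_conj_mul_lt h,
    norm_lt_one_of_norm_add_sub_conj_mul_lt (w := z) ?_⟩, fun ⟨hz, hw⟩ => ?_⟩
  · rwa [add_comm w, mul_comm w]
  have hupper : ‖z * ((1 - ‖w‖ ^ 2 : ℝ) : ℂ) + w * ((1 - ‖z‖ ^ 2 : ℝ) : ℂ)‖ ≤
      ‖z‖ * (1 - ‖w‖ ^ 2) + ‖w‖ * (1 - ‖z‖ ^ 2) := by
    refine (norm_add_le _ _).trans (le_of_eq ?_)
    rw [norm_mul, norm_mul, norm_real, norm_real, Real.norm_of_nonneg (by nlinarith [norm_nonneg w]),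
      Real.norm_of_nonneg (by nlinarith [norm_nonneg z])]
  rw [add_sub_conj_add_mul_mul, norm_mul]
  nlinarith [mul_pos (mul_pos (sub_pos.2 hz) (sub_pos.2 hw))
    (sub_pos.2 (mul_lt_one_of_nonneg_of_lt_one_left (norm_nonneg z) hz hw.le))]

lemma exists_add_eq_and_mul_eq (s p : ℂ) : ∃ z w : ℂ, z + w = s ∧ z * w = p := by
  obtain ⟨d, hd⟩ := IsAlgClosed.exists_pow_nat_eq (s ^ 2 - 4 * p) two_pos
  exact ⟨(s + d) / 2, (s - d) / 2, by ring, by linear_combination -hd / 4⟩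

lemma mem_G2rho_iff {ρ : ℝ} {s p : ℂ} :
    (s, p) ∈ G2rho ρ ↔ ‖s - conj s * p‖ < 1 - ‖p‖ ^ 2 ∧ ‖p‖ < ρ := by
  constructor
  · rintro ⟨⟨z, w⟩, ⟨hz, hw, hzw⟩, h⟩
    obtain ⟨rfl, rfl⟩ := Prod.mk.inj h
    exact ⟨(norm_add_sub_conj_mul_lt_iff z w).2 ⟨hz, hw⟩, hzw⟩
  · rintro ⟨h, hp⟩
    obtain ⟨z, w, rfl, rfl⟩ := exists_add_eq_and_mul_eq s p
    obtain ⟨hz, hw⟩ := (norm_add_sub_conj_mul_lt_iff z w).1 h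
    exact ⟨(z, w), ⟨hz, hw, hp⟩, rfl⟩

section Tetrablock

variable {x₁ x₂ x₃ : ℂ}

lemma norm_lt_one_of_mem_tetrablockE (hx : (x₁, x₂, x₃) ∈ tetrablockE) : ‖x₃‖ < 1 := by
  have := hx.out
  nlinarith [norm_nonneg (x₁ - conj x₂ * x₃), norm_nonneg (x₂ - conj x₁ * x₃), norm_nonneg x₃]

lemma norm_mul_one_sub_sq_le :
    ‖x₂‖ * (1 - ‖x₃‖ ^ 2) ≤ ‖x₂ - conj x₁ * x₃‖ + ‖x₁ - conj x₂ * x₃‖ * ‖x₃‖ := by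
  have h₁ : ‖x₁‖ ≤ ‖x₁ - conj x₂ * x₃‖ + ‖x₂‖ * ‖x₃‖ := by
    simpa [norm_mul] using norm_le_norm_sub_add x₁ (conj x₂ * x₃)
  have h₂ : ‖x₂‖ ≤ ‖x₂ - conj x₁ * x₃‖ + ‖x₁‖ * ‖x₃‖ := by
    simpa [norm_mul] using norm_le_norm_sub_add x₂ (conj x₁ * x₃)
  nlinarith [mul_le_mul_of_nonneg_right h₁ (norm_nonneg x₃)]

lemma norm_sub_conj_mul_le (ω : ℂ) (hω : ‖ω‖ ≤ 1) :
    ‖x₁ + ω * x₂ - conj (x₁ + ω * x₂) * (ω * x₃)‖ ≤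
      ‖x₁ - conj x₂ * x₃‖ + ‖ω‖ * ‖x₂ - conj x₁ * x₃‖ + (1 - ‖ω‖ ^ 2) * (‖x₂‖ * ‖x₃‖) := by
  have key : x₁ + ω * x₂ - conj (x₁ + ω * x₂) * (ω * x₃) =
      (x₁ - conj x₂ * x₃) + ω * (x₂ - conj x₁ * x₃) + ((1 - ‖ω‖ ^ 2 : ℝ) : ℂ) * (conj x₂ * x₃) := by
    simp only [map_add, map_mul]
    push_cast
    linear_combination (-(conj x₂ * x₃)) * mul_conj' ω
  rw [key]
  refine (norm_add₃_le).trans (le_of_eq ?_)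
  rw [norm_mul, norm_mul, norm_mul, norm_conj, norm_real,
    Real.norm_of_nonneg (by nlinarith [norm_nonneg ω])]

lemma norm_sub_conj_mul_lt_of_mem_tetrablockE (ω : ℂ) (hω : ‖ω‖ ≤ 1)
    (hx : (x₁, x₂, x₃) ∈ tetrablockE) :
    ‖x₁ + ω * x₂ - conj (x₁ + ω * x₂) * (ω * x₃)‖ < 1 - ‖ω * x₃‖ ^ 2 := by
  have hE : ‖x₁ - conj x₂ * x₃‖ + ‖x₂ - conj x₁ * x₃‖ + ‖x₃‖ ^ 2 < 1 := hx
  have ht := norm_lt_one_of_mem_tetrablockE hx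
  have hm := norm_mul_one_sub_sq_le (x₁ := x₁) (x₂ := x₂) (x₃ := x₃)
  refine (norm_sub_conj_mul_le ω hω).trans_lt ?_
  rw [norm_mul]
  set a := ‖x₁ - conj x₂ * x₃‖
  set b := ‖x₂ - conj x₁ * x₃‖
  set t := ‖x₃‖
  set u := ‖ω‖
  have ha : 0 ≤ a := norm_nonneg _
  have hb : 0 ≤ b := norm_nonneg _
  have ht0 : 0 ≤ t := norm_nonneg _
  have hu0 : 0 ≤ u := norm_nonneg _
  nlinarith [mul_nonneg (mul_nonneg (sub_nonneg.2 (pow_le_one₀ hu0 hω (n := 2))) ht0) (sub_nonneg.2 hm),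
    mul_nonneg (mul_nonneg hb (sub_nonneg.2 (mul_le_one₀ hω ht0 ht.le)))
      (mul_nonneg (sub_nonneg.2 ht.le) (sub_nonneg.2 hω)),
    mul_pos (sub_pos.2 hE) (sub_pos.2 (mul_lt_one_of_nonneg_of_lt_one_right hω ht0 ht : u * t < 1)),
    mul_nonneg hu0 ht0]

lemma mk_conj_mul_mem_tetrablockE {a t : ℂ} (ha : ‖a‖ < 1) (ht : ‖t‖ < 1) :
    (a, conj a * t, t) ∈ tetrablockE := by
  show ‖a - conj (conj a * t) * t‖ + ‖conj a * t - conj a * t‖ + ‖t‖ ^ 2 < 1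
  have : a - conj (conj a * t) * t = a * ((1 - ‖t‖ ^ 2 : ℝ) : ℂ) := by
    rw [map_mul, conj_conj]
    push_cast
    linear_combination (-a) * conj_mul' t
  rw [this, sub_self, norm_zero, norm_mul, norm_real, Real.norm_of_nonneg (by nlinarith [norm_nonneg t])]
  nlinarith [mul_pos (sub_pos.2 ha) (by nlinarith [norm_nonneg t] : (0 : ℝ) < 1 - ‖t‖ ^ 2)]

end Tetrablock

lemma conj_sub_conj_mul_div (s p : ℂ) :
    conj ((s - conj s * p) / (1 - (‖p‖ : ℂ) ^ 2)) = (conj s - s * conj p) / (1 - (‖p‖ : ℂ) ^ 2) := by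
  simp only [map_div₀, map_sub, map_mul, map_one, map_pow, conj_conj, conj_ofReal]

lemma sub_conj_mul_div_add_conj_mul (s : ℂ) {p : ℂ} (hp : ‖p‖ ≠ 1) :
    (s - conj s * p) / (1 - (‖p‖ : ℂ) ^ 2) + (conj s - s * conj p) / (1 - (‖p‖ : ℂ) ^ 2) * p = s := by
  have hD : (1 : ℂ) - (‖p‖ : ℂ) ^ 2 ≠ 0 := by
    have : (1 : ℝ) - ‖p‖ ^ 2 ≠ 0 := sub_ne_zero.2 fun h =>
      hp ((pow_eq_one_iff_of_nonneg (norm_nonneg p) two_ne_zero).1 h.symm)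
    exact_mod_cast this
  field_simp
  linear_combination (-s) * conj_mul' p

lemma norm_sub_conj_mul_div_lt_one {s p : ℂ} (h : ‖s - conj s * p‖ < 1 - ‖p‖ ^ 2) :
    ‖(s - conj s * p) / (1 - (‖p‖ : ℂ) ^ 2)‖ < 1 := by
  have hD : 0 < 1 - ‖p‖ ^ 2 := (norm_nonneg _).trans_lt h
  rw [norm_div, show (1 : ℂ) - (‖p‖ : ℂ) ^ 2 = ((1 - ‖p‖ ^ 2 : ℝ) : ℂ) by push_cast; ring, norm_real,
    Real.norm_of_nonneg hD.le, div_lt_one hD]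
  exact h

lemma tetrablockE_preimage_of_mem_G2rho {ω s p : ℂ} (hsp : (s, p) ∈ G2rho ‖ω‖) :
    ((s - conj s * p) / (1 - (‖p‖ : ℂ) ^ 2),
        (conj s - s * conj p) / (1 - (‖p‖ : ℂ) ^ 2) * (p / ω), p / ω) ∈ tetrablockE ∧
      ((s - conj s * p) / (1 - (‖p‖ : ℂ) ^ 2) +
          ω * ((conj s - s * conj p) / (1 - (‖p‖ : ℂ) ^ 2) * (p / ω)),
        ω * (p / ω)) = (s, p) := by
  obtain ⟨hsp, hp⟩ := mem_G2rho_iff.1 hsp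
  have hω : 0 < ‖ω‖ := (norm_nonneg p).trans_lt hp
  have hp1 : ‖p‖ < 1 := by nlinarith [norm_nonneg (s - conj s * p), norm_nonneg p]
  refine ⟨?_, ?_⟩
  · rw [← conj_sub_conj_mul_div]
    exact mk_conj_mul_mem_tetrablockE (norm_sub_conj_mul_div_lt_one hsp)
      (by rwa [norm_div, div_lt_one hω])
  · rw [mul_left_comm, mul_div_cancel₀ p (norm_pos_iff.1 hω),
      sub_conj_mul_div_add_conj_mul s hp1.ne]

lemma map_mem_G2rho_of_mem_tetrablockE {ω : ℂ} (hω0 : 0 < ‖ω‖) (hω1 : ‖ω‖ ≤ 1)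
    {x : ℂ × ℂ × ℂ} (hx : x ∈ tetrablockE) : (x.1 + ω * x.2.1, ω * x.2.2) ∈ G2rho ‖ω‖ := by
  obtain ⟨x₁, x₂, x₃⟩ := x
  refine mem_G2rho_iff.2 ⟨norm_sub_conj_mul_lt_of_mem_tetrablockE ω hω1 hx, ?_⟩
  rw [norm_mul]
  exact mul_lt_of_lt_one_right hω0 (norm_lt_one_of_mem_tetrablockE hx)

theorem Phi_surjective_onto_G2rho (ω : ℂ)
    (hω0 : 0 < ‖ω‖) (hω1 : ‖ω‖ ≤ 1) :
    (∀ s p : ℂ, (s, p) ∈ G2rho (‖ω‖) →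
      (((s - (starRingEnd ℂ) s * p) / (1 - ((‖p‖ : ℝ) : ℂ) ^ 2),
        (((starRingEnd ℂ) s - s * (starRingEnd ℂ) p) / (1 - ((‖p‖ : ℝ) : ℂ) ^ 2)) * (p / ω),
        p / ω) ∈ tetrablockE ∧
      ((s - (starRingEnd ℂ) s * p) / (1 - ((‖p‖ : ℝ) : ℂ) ^ 2) +
          ω * ((((starRingEnd ℂ) s - s * (starRingEnd ℂ) p) / (1 - ((‖p‖ : ℝ) : ℂ) ^ 2)) * (p / ω)),
        ω * (p / ω)) = (s, p))) ∧
    (fun x : ℂ × ℂ × ℂ => (x.1 + ω * x.2.1, ω * x.2.2)) '' tetrablockE =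
      G2rho (‖ω‖) := by
  refine ⟨fun s p hsp => tetrablockE_preimage_of_mem_G2rho hsp, Set.Subset.antisymm ?_ ?_⟩
  · rintro _ ⟨x, hx, rfl⟩
    exact map_mem_G2rho_of_mem_tetrablockE hω0 hω1 hx
  · exact fun ⟨s, p⟩ hsp => ⟨_, tetrablockE_preimage_of_mem_G2rho hsp⟩
end
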